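/- arXiv:2506.10455 — 6 statements merged into one kernel-verified Lean document; each statement's English description precedes it below -/
import Mathlib

section
/- Let X be a continuum (a compact connected metric space with more than one point), let n ≥ 2 be an integer, and let f : X → X be a continuous map. If SF_n(f) is sensitive, then F_n(f) is sensitive (with the same sensitivity constant); and if F_n(f) is sensitive, then f is sensitive (with the same sensitivity constant). -/
open Metric Set TopologicalSpace

variable (X : Type*) [MetricSpace X] (n : ℕ)

/-- The `n`-fold symmetric product `F_n(X)`: nonempty subsets of `X` with at most `n`
points, as a subspace of the nonempty compact subsets of `X` with the Hausdorff metric. -/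
abbrev Fn := {A : NonemptyCompacts X // (A : Set X).Finite ∧ (A : Set X).ncard ≤ n}

/-- The induced map `F_n(f)` on the `n`-fold symmetric product, `A ↦ f(A)`. -/
noncomputable def FnMap (f : X → X) : Fn X n → Fn X n := fun A =>
  ⟨⟨⟨f '' (A.1 : Set X), (A.2.1.image f).isCompact⟩, A.1.nonempty.image f⟩,
    A.2.1.image f, le_trans (Set.ncard_image_le A.2.1) A.2.2⟩

/-- `F_1(X) ⊆ F_n(X)`: the set of singletons. -/
def F1 : Set (Fn X n) := {A | ∃ x : X, (A.1 : Set X) = {x}}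

/-- The setoid collapsing `F_1(X)` to a point. -/
def SFnSetoid : Setoid (Fn X n) where
  r A B := A = B ∨ (A ∈ F1 X n ∧ B ∈ F1 X n)
  iseqv := by
    refine ⟨fun _ => Or.inl rfl, fun h => h.imp Eq.symm And.symm, fun h₁ h₂ => ?_⟩
    rcases h₁ with rfl | h₁
    · exact h₂
    · rcases h₂ with rfl | h₂
      · exact Or.inr h₁
      · exact Or.inr ⟨h₁.1, h₂.2⟩

/-- The `n`-fold symmetric product suspension `SF_n(X) = F_n(X)/F_1(X)`,
with the quotient topology. -/
abbrev SFn := Quotient (SFnSetoid X n)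

/-- The quotient map `q : F_n(X) → SF_n(X)`. -/
def SFnQ : Fn X n → SFn X n := Quotient.mk (SFnSetoid X n)

/-- The induced map `SF_n(f)` on the suspension, with `SF_n(f) ∘ q = q ∘ F_n(f)`. -/
noncomputable def SFnMap (f : X → X) : SFn X n → SFn X n :=
  Quotient.lift (fun A => SFnQ X n (FnMap X n f A))
    (fun A B h => Quotient.sound (by
      rcases h with rfl | ⟨⟨x, hx⟩, ⟨y, hy⟩⟩
      · exact Or.inl rfl
      · exact Or.inr ⟨⟨f x, by simp [FnMap, hx]⟩, ⟨f y, by simp [FnMap, hy]⟩⟩))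

/-- The metric `ρ` on `SF_n(X)`:
`ρ(χ₁,χ₂) = H(F_1(X) ∪ q⁻¹(χ₁), F_1(X) ∪ q⁻¹(χ₂))` where `H` is the Hausdorff
distance between subsets of `F_n(X)`. -/
noncomputable def SFnDist : SFn X n → SFn X n → ℝ := fun a b =>
  Metric.hausdorffDist (F1 X n ∪ SFnQ X n ⁻¹' {a}) (F1 X n ∪ SFnQ X n ⁻¹' {b})

/-- `g` is sensitive with sensitivity constant `δ` (w.r.t. a distance function `d` and
the topology of `Z`): every nonempty open set contains two points whose iterates
separate by more than `δ`. -/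
def SensitiveWith {Z : Type*} [TopologicalSpace Z] (d : Z → Z → ℝ) (g : Z → Z) (δ : ℝ) : Prop :=
  ∀ U : Set Z, IsOpen U → U.Nonempty →
    ∃ x ∈ U, ∃ y ∈ U, ∃ k : ℕ, 0 < k ∧ δ < d (g^[k] x) (g^[k] y)

/-!
Sensitivity of `F_n(f)` descends to `f`: the Hausdorff distance between `f^[k] '' A` and
`f^[k] '' B` exceeds `δ` only if some point of the one is `δ`-far from some point of the other, and
the elements of `F_n(X)` close to a singleton `{x}` consist of points close to `x`.

Sensitivity of `SF_n(f)` lifts to `F_n(f)` because `q` is `1`-Lipschitz for `ρ` and semiconjugates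
`F_n(f)` to `SF_n(f)`, and every nonempty open set of `F_n(X)` contains a ball missing `F_1(X)`:
a continuum has no isolated points, so near every `A` there is an element with two points, and
a ball small compared with the distance of those two points contains no singleton. Such a ball
is saturated for `q`, so its image is open in `SF_n(X)`.
-/

theorem exists_lt_dist_of_lt_hausdorffDist {α : Type*} [PseudoMetricSpace α] {s t : Set α}
    {r : ℝ} (hr : 0 ≤ r) (h : r < hausdorffDist s t) : ∃ x ∈ s, ∃ y ∈ t, r < dist x y := by
  rcases s.eq_empty_or_nonempty with rfl | ⟨x₀, hx₀⟩
  · simp only [hausdorffDist_empty'] at h; linarith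
  rcases t.eq_empty_or_nonempty with rfl | ⟨y₀, hy₀⟩
  · simp only [hausdorffDist_empty] at h; linarith
  by_contra! H
  exact h.not_ge <| hausdorffDist_le_of_mem_dist hr (fun x hx => ⟨y₀, hy₀, H x hx y₀ hy₀⟩)
    fun y hy => ⟨x₀, hx₀, dist_comm x₀ y ▸ H x₀ hx₀ y hy⟩

theorem SensitiveWith.of_semiconj {Y Z : Type*} [TopologicalSpace Y] [TopologicalSpace Z]
    {dY : Y → Y → ℝ} {dZ : Z → Z → ℝ} {g : Y → Y} {h : Z → Z} {q : Y → Z} {δ : ℝ}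
    (hsens : SensitiveWith dZ h δ) (hq : Function.Semiconj q g h)
    (hd : ∀ a b, dZ (q a) (q b) ≤ dY a b)
    (hopen : ∀ U : Set Y, IsOpen U → U.Nonempty →
      ∃ V : Set Y, V.Nonempty ∧ IsOpen (q '' V) ∧ q ⁻¹' (q '' V) ⊆ U) :
    SensitiveWith dY g δ := by
  intro U hU hne
  obtain ⟨V, hV, hqV, hVU⟩ := hopen U hU hne
  obtain ⟨_, ⟨a, ha, rfl⟩, _, ⟨b, hb, rfl⟩, k, hk, hab⟩ := hsens _ hqV (hV.image q)
  refine ⟨a, hVU ⟨a, ha, rfl⟩, b, hVU ⟨b, hb, rfl⟩, k, hk, ?_⟩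
  rw [← (hq.iterate_right k) a, ← (hq.iterate_right k) b] at hab
  exact hab.trans_le (hd _ _)

section SymmetricProduct

variable {X : Type*} [MetricSpace X] {n : ℕ}

namespace Fn

def ofFinite (s : Set X) (hne : s.Nonempty) (hfin : s.Finite) (hcard : s.ncard ≤ n) : Fn X n :=
  ⟨⟨⟨s, hfin.isCompact⟩, hne⟩, hfin, hcard⟩

@[simp]
theorem coe_ofFinite (s : Set X) (hne : s.Nonempty) (hfin : s.Finite) (hcard : s.ncard ≤ n) :
    ((ofFinite s hne hfin hcard).1 : Set X) = s :=
  rfl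

theorem dist_eq (A B : Fn X n) : dist A B = hausdorffDist (A.1 : Set X) (B.1 : Set X) := by
  rw [Subtype.dist_eq, NonemptyCompacts.dist_eq]

theorem infDist_le_dist {A B : Fn X n} {a : X} (ha : a ∈ (A.1 : Set X)) :
    infDist a (B.1 : Set X) ≤ dist A B :=
  (dist_eq A B).symm ▸ infDist_le_hausdorffDist_of_mem ha
    (hausdorffEDist_ne_top_of_nonempty_of_bounded A.1.nonempty B.1.nonempty
      A.1.isCompact.isBounded B.1.isCompact.isBounded)

theorem subset_ball_of_dist_lt {A B : Fn X n} {x : X} {ε : ℝ} (hB : (B.1 : Set X) = {x})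
    (h : dist A B < ε) : (A.1 : Set X) ⊆ ball x ε := fun a ha => by
  have := infDist_le_dist (B := B) ha
  rw [hB, infDist_singleton] at this
  exact mem_ball.2 (this.trans_lt h)

theorem disjoint_ball_F1 {B : Fn X n} {a b : X} (ha : a ∈ (B.1 : Set X))
    (hb : b ∈ (B.1 : Set X)) : Disjoint (ball B (dist a b / 2)) (F1 X n) := by
  refine Set.disjoint_left.2 fun C hC ⟨x, hx⟩ => ?_
  have hax := infDist_le_dist (B := C) ha
  have hbx := infDist_le_dist (B := C) hb
  rw [hx, infDist_singleton] at hax hbx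
  rw [mem_ball, dist_comm] at hC
  linarith [dist_triangle_right a b x]

theorem exists_dist_lt_nontrivial [ConnectedSpace X] [Nontrivial X] (hn : 2 ≤ n) (A : Fn X n)
    {ε : ℝ} (hε : 0 < ε) : ∃ B : Fn X n, dist B A < ε ∧ (B.1 : Set X).Nontrivial := by
  rcases (A.1 : Set X).subsingleton_or_nontrivial with hA | hA
  · obtain ⟨a, ha⟩ := A.1.nonempty
    -- a connected space with two points has no isolated point
    obtain ⟨y, hya, hy⟩ : ∃ y, y ≠ a ∧ y ∈ ball a ε :=
      (PerfectSpace.not_isolated a).nonempty_of_mem (inter_mem_nhdsWithin _ (ball_mem_nhds a hε))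
    refine ⟨ofFinite {a, y} (insert_nonempty a {y}) (toFinite _)
      ((ncard_pair hya.symm).trans_le hn), ?_, nontrivial_pair hya.symm⟩
    rw [dist_eq, coe_ofFinite, hA.eq_singleton_of_mem ha]
    refine (hausdorffDist_le_of_mem_dist dist_nonneg ?_ ?_).trans_lt (mem_ball.1 hy)
    · rintro x (rfl | rfl)
      · exact ⟨x, rfl, by simp⟩
      · exact ⟨a, rfl, le_rfl⟩
    · rintro x rfl
      exact ⟨x, mem_insert x {y}, by simp⟩
  · exact ⟨A, by simpa using hε, hA⟩

theorem exists_ball_subset_disjoint_F1 [ConnectedSpace X] [Nontrivial X] (hn : 2 ≤ n)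
    {U : Set (Fn X n)} (hU : IsOpen U) (hne : U.Nonempty) :
    ∃ B r, 0 < r ∧ ball B r ⊆ U ∧ Disjoint (ball B r) (F1 X n) := by
  obtain ⟨A, hA⟩ := hne
  obtain ⟨ε, hε, hAU⟩ := isOpen_iff.1 hU A hA
  obtain ⟨B, hBA, a, ha, b, hb, hab⟩ := exists_dist_lt_nontrivial hn A (half_pos hε)
  refine ⟨B, min (ε / 2) (dist a b / 2), lt_min (half_pos hε) (half_pos (dist_pos.2 hab)), ?_,
    (disjoint_ball_F1 ha hb).mono_left (ball_subset_ball (min_le_right _ _))⟩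
  refine (ball_subset_ball (min_le_left _ _)).trans ((ball_subset_ball' ?_).trans hAU)
  linarith

end Fn

theorem coe_FnMap_iterate (f : X → X) (k : ℕ) (A : Fn X n) :
    (((FnMap X n f)^[k] A).1 : Set X) = f^[k] '' (A.1 : Set X) := by
  induction k generalizing A with
  | zero => simp
  | succ k ih =>
    rw [Function.iterate_succ_apply, ih, Function.iterate_succ, Set.image_comp]
    rfl

theorem semiconj_SFnQ (f : X → X) : Function.Semiconj (SFnQ X n) (FnMap X n f) (SFnMap X n f) :=
  fun _ => rfl

theorem F1_union_SFnQ_preimage_singleton (A : Fn X n) :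
    F1 X n ∪ SFnQ X n ⁻¹' {SFnQ X n A} = F1 X n ∪ {A} := by
  ext B
  simp only [mem_union, mem_preimage, mem_singleton_iff, SFnQ, Quotient.eq]
  constructor
  · rintro (hB | rfl | ⟨hB, -⟩) <;> tauto
  · rintro (hB | rfl) <;> tauto

theorem SFnDist_SFnQ_le (A B : Fn X n) : SFnDist X n (SFnQ X n A) (SFnQ X n B) ≤ dist A B := by
  rw [SFnDist, F1_union_SFnQ_preimage_singleton, F1_union_SFnQ_preimage_singleton]
  apply hausdorffDist_le_of_mem_dist dist_nonneg
  · rintro C (hC | rfl)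
    · exact ⟨C, Or.inl hC, by simp⟩
    · exact ⟨B, Or.inr rfl, le_rfl⟩
  · rintro C (hC | rfl)
    · exact ⟨C, Or.inl hC, by simp⟩
    · exact ⟨A, Or.inr rfl, (dist_comm _ _).le⟩

theorem SFnQ_preimage_image_of_disjoint {V : Set (Fn X n)} (hV : Disjoint V (F1 X n)) :
    SFnQ X n ⁻¹' (SFnQ X n '' V) = V := by
  refine Subset.antisymm ?_ (subset_preimage_image _ _)
  rintro C ⟨D, hD, hDC⟩
  rcases Quotient.eq.1 hDC with rfl | ⟨hD1, -⟩
  · exact hD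
  · exact (hV.notMem_of_mem_left hD hD1).elim

theorem isOpen_SFnQ_image {V : Set (Fn X n)} (hV : IsOpen V) (hVF : Disjoint V (F1 X n)) :
    IsOpen (SFnQ X n '' V) := by
  rw [← isQuotientMap_quotient_mk'.isOpen_preimage]
  exact (SFnQ_preimage_image_of_disjoint hVF).symm ▸ hV

theorem SensitiveWith.FnMap_of_SFnMap [ConnectedSpace X] [Nontrivial X] (hn : 2 ≤ n)
    {f : X → X} {δ : ℝ} (h : SensitiveWith (SFnDist X n) (SFnMap X n f) δ) :
    SensitiveWith dist (FnMap X n f) δ := by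
  refine h.of_semiconj (semiconj_SFnQ f) SFnDist_SFnQ_le fun U hU hne => ?_
  obtain ⟨B, r, hr, hBU, hBF⟩ := Fn.exists_ball_subset_disjoint_F1 hn hU hne
  exact ⟨ball B r, ⟨B, mem_ball_self hr⟩, isOpen_SFnQ_image isOpen_ball hBF,
    (SFnQ_preimage_image_of_disjoint hBF).symm ▸ hBU⟩

theorem SensitiveWith.of_FnMap (hn : 1 ≤ n) {f : X → X} {δ : ℝ} (hδ : 0 ≤ δ)
    (h : SensitiveWith dist (FnMap X n f) δ) : SensitiveWith dist f δ := by
  intro U hU ⟨x, hx⟩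
  obtain ⟨ε, hε, hxU⟩ := isOpen_iff.1 hU x hx
  let S : Fn X n := Fn.ofFinite {x} (singleton_nonempty x) (finite_singleton x)
    ((ncard_singleton x).trans_le hn)
  obtain ⟨A, hA, B, hB, k, hk, hAB⟩ := h (ball S ε) isOpen_ball ⟨S, mem_ball_self hε⟩
  rw [Fn.dist_eq, coe_FnMap_iterate, coe_FnMap_iterate] at hAB
  obtain ⟨_, ⟨a, ha, rfl⟩, _, ⟨b, hb, rfl⟩, hab⟩ := exists_lt_dist_of_lt_hausdorffDist hδ hAB
  exact ⟨a, hxU (Fn.subset_ball_of_dist_lt rfl hA ha), b, hxU (Fn.subset_ball_of_dist_lt rfl hB hb),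
    k, hk, hab⟩

end SymmetricProduct

theorem stmt0_general (X : Type*) [MetricSpace X] [ConnectedSpace X] [Nontrivial X]
    (n : ℕ) (hn : 2 ≤ n) (f : X → X) (δ : ℝ) (hδ : 0 < δ) :
    (SensitiveWith (SFnDist X n) (SFnMap X n f) δ → SensitiveWith dist (FnMap X n f) δ) ∧
    (SensitiveWith dist (FnMap X n f) δ → SensitiveWith (dist : X → X → ℝ) f δ) :=
  ⟨SensitiveWith.FnMap_of_SFnMap hn, SensitiveWith.of_FnMap (one_le_two.trans hn) hδ.le⟩

theorem stmt0 (X : Type*) [MetricSpace X] [CompactSpace X] [ConnectedSpace X] [Nontrivial X]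
    (n : ℕ) (hn : 2 ≤ n) (f : X → X) (hf : Continuous f) (δ : ℝ) (hδ : 0 < δ) :
    (SensitiveWith (SFnDist X n) (SFnMap X n f) δ → SensitiveWith dist (FnMap X n f) δ) ∧
    (SensitiveWith dist (FnMap X n f) δ → SensitiveWith (dist : X → X → ℝ) f δ) :=
  stmt0_general X n hn f δ hδ
end

section
/- Let X be a continuum (a compact connected metric space with more than one point), let n ≥ 2 be an integer, and let f : X → X be a continuous map. Then F_n(f) is Z-transitive if and only if SF_n(f) is Z-transitive; moreover, if F_n(f) is Z-transitive, then f is Z-transitive. -/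
open Metric Set TopologicalSpace

variable (X : Type*) [MetricSpace X] (n : ℕ)

/-- `g^k(U)` for `k : ℤ`, where for negative `k` it means the preimage under `g^{|k|}`. -/
def ZIterImage {Z : Type*} (g : Z → Z) (k : ℤ) (U : Set Z) : Set Z :=
  if 0 ≤ k then g^[k.toNat] '' U else g^[(-k).toNat] ⁻¹' U

/-- `g` is Z-transitive: for all nonempty open `U, V` there is `k : ℤ` with
`g^k(U) ∩ V ≠ ∅`. -/
def ZTransitive {Z : Type*} [TopologicalSpace Z] (g : Z → Z) : Prop :=
  ∀ U V : Set Z, IsOpen U → IsOpen V → U.Nonempty → V.Nonempty →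
    ∃ k : ℤ, (ZIterImage g k U ∩ V).Nonempty

section Aux

variable {X : Type*} [MetricSpace X] {n : ℕ}

lemma fn_dist_eq (A B : Fn X n) :
    dist A B = hausdorffDist ((A.1 : Set X)) ((B.1 : Set X)) := by
  rw [Subtype.dist_eq, Metric.NonemptyCompacts.dist_eq]

lemma fn_edist_ne_top (A B : Fn X n) :
    EMetric.hausdorffEdist ((A.1 : Set X)) ((B.1 : Set X)) ≠ ⊤ :=
  hausdorffEdist_ne_top_of_nonempty_of_bounded A.1.nonempty B.1.nonempty
    A.1.isCompact.isBounded B.1.isCompact.isBounded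

lemma isOpen_fn_subsets {U : Set X} (hU : IsOpen U) :
    IsOpen {A : Fn X n | (A.1 : Set X) ⊆ U} := by
  rw [Metric.isOpen_iff]
  rintro A hA
  obtain ⟨δ, δpos, hδ⟩ := A.1.isCompact.exists_thickening_subset_open hU hA
  refine ⟨δ, δpos, fun B hB => ?_⟩
  intro b hb
  apply hδ
  rw [mem_ball, fn_dist_eq] at hB
  have h1 : infDist b ((A.1 : Set X)) ≤ hausdorffDist ((B.1 : Set X)) ((A.1 : Set X)) :=
    infDist_le_hausdorffDist_of_mem hb (fn_edist_ne_top B A)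
  exact (mem_thickening_iff_infDist_lt A.1.nonempty).2 (h1.trans_lt hB)

lemma isClosed_F1 : IsClosed (F1 X n) := by
  rw [← isOpen_compl_iff, Metric.isOpen_iff]
  rintro A hA
  obtain ⟨x, hx⟩ := A.1.nonempty
  have hxy : ∃ y ∈ (A.1 : Set X), y ≠ x := by
    by_contra h
    push_neg at h
    exact hA ⟨x, Set.eq_singleton_iff_unique_mem.2 ⟨hx, h⟩⟩
  obtain ⟨y, hy, hyx⟩ := hxy
  have hd : 0 < dist y x := dist_pos.2 hyx
  refine ⟨dist y x / 3, by linarith, fun B hB hBF1 => ?_⟩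
  obtain ⟨z, hz⟩ := hBF1
  rw [mem_ball, fn_dist_eq, hausdorffDist_comm] at hB
  have h1 : dist x z < dist y x / 3 := by
    have h := (infDist_le_hausdorffDist_of_mem hx (fn_edist_ne_top A B)).trans_lt hB
    rwa [hz, infDist_singleton] at h
  have h2 : dist y z < dist y x / 3 := by
    have h := (infDist_le_hausdorffDist_of_mem hy (fn_edist_ne_top A B)).trans_lt hB
    rwa [hz, infDist_singleton] at h
  have := dist_triangle y z x
  rw [dist_comm z x] at this
  linarith

lemma exists_close_ne [ConnectedSpace X] [Nontrivial X] (x : X) {ε : ℝ} (hε : 0 < ε) :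
    ∃ y : X, y ≠ x ∧ dist y x < ε := by
  by_contra h
  push_neg at h
  have hs : ({x} : Set X) = Metric.ball x ε := by
    ext y
    simp only [Set.mem_singleton_iff, Metric.mem_ball]
    constructor
    · rintro rfl; simpa using hε
    · intro hy
      by_contra hne
      exact absurd hy (not_lt.2 (h y hne))
  have hclopen : IsClopen ({x} : Set X) := ⟨isClosed_singleton, hs ▸ Metric.isOpen_ball⟩
  obtain ⟨z, hz⟩ := exists_ne x
  have huniv := hclopen.eq_univ ⟨x, rfl⟩
  exact hz (by have : z ∈ ({x} : Set X) := huniv ▸ Set.mem_univ z; simpa using this)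

/-- A singleton as an element of `Fn X n`. -/
def FnSing (hn : 1 ≤ n) (x : X) : Fn X n :=
  ⟨⟨⟨{x}, isCompact_singleton⟩, Set.singleton_nonempty x⟩,
    Set.finite_singleton x, by simpa [Set.ncard_singleton] using hn⟩

lemma fnSing_coe (hn : 1 ≤ n) (x : X) : ((FnSing hn x).1 : Set X) = {x} := rfl

/-- A pair as an element of `Fn X n`. -/
def FnPair (hn : 2 ≤ n) (x y : X) : Fn X n :=
  ⟨⟨⟨{x, y}, ((Set.finite_singleton y).insert x).isCompact⟩, ⟨x, Set.mem_insert x _⟩⟩,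
    (Set.finite_singleton y).insert x,
    le_trans (le_trans (Set.ncard_insert_le x {y}) (by simp [Set.ncard_singleton])) hn⟩

lemma fnPair_coe (hn : 2 ≤ n) (x y : X) : ((FnPair hn x y).1 : Set X) = {x, y} := rfl

lemma sfnq_surjective : Function.Surjective (SFnQ X n) := fun χ => Quot.exists_rep χ

lemma continuous_sfnq : Continuous (SFnQ X n) := continuous_quot_mk

lemma sfnq_exact {A B : Fn X n} (h : SFnQ X n A = SFnQ X n B) :
    A = B ∨ (A ∈ F1 X n ∧ B ∈ F1 X n) := Quotient.exact h

lemma isOpen_sfnq_image {U : Set (Fn X n)} (hU : IsOpen U) (h1 : ∀ A ∈ U, A ∉ F1 X n) :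
    IsOpen (SFnQ X n '' U) := by
  have hsat : SFnQ X n ⁻¹' (SFnQ X n '' U) = U := by
    ext A
    constructor
    · rintro ⟨B, hB, hBA⟩
      rcases sfnq_exact hBA with rfl | ⟨hB1, hA1⟩
      · exact hB
      · exact absurd hB1 (h1 B hB)
    · intro hA; exact ⟨A, hA, rfl⟩
  have h2 : IsOpen (Quot.mk ⇑(SFnSetoid X n) ⁻¹' (SFnQ X n '' U)) := by
    rw [show Quot.mk ⇑(SFnSetoid X n) ⁻¹' (SFnQ X n '' U) = SFnQ X n ⁻¹' (SFnQ X n '' U) from rfl,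
      hsat]
    exact hU
  exact isQuotientMap_quot_mk.isOpen_preimage.1 h2

lemma sfn_q_comm (f : X → X) (A : Fn X n) :
    SFnMap X n f (SFnQ X n A) = SFnQ X n (FnMap X n f A) := rfl

lemma sfn_q_iter (f : X → X) (m : ℕ) (A : Fn X n) :
    (SFnMap X n f)^[m] (SFnQ X n A) = SFnQ X n ((FnMap X n f)^[m] A) := by
  induction m generalizing A with
  | zero => rfl
  | succ m ih =>
    rw [Function.iterate_succ_apply, Function.iterate_succ_apply, sfn_q_comm, ih]

lemma fnmap_iter_coe (f : X → X) (m : ℕ) (A : Fn X n) :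
    (((FnMap X n f)^[m] A).1 : Set X) = f^[m] '' (A.1 : Set X) := by
  induction m generalizing A with
  | zero => simp
  | succ m ih =>
    rw [Function.iterate_succ_apply, ih,
      show ((FnMap X n f A).1 : Set X) = f '' (A.1 : Set X) from rfl,
      Function.iterate_succ, Set.image_comp]

end Aux

theorem stmt3 (X : Type*) [MetricSpace X] [CompactSpace X] [ConnectedSpace X] [Nontrivial X]
    (n : ℕ) (hn : 2 ≤ n) (f : X → X) (hf : Continuous f) :
    (ZTransitive (FnMap X n f) ↔ ZTransitive (SFnMap X n f)) ∧
    (ZTransitive (FnMap X n f) → ZTransitive f) := by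
  have hn1 : 1 ≤ n := le_trans one_le_two hn
  refine ⟨⟨?_, ?_⟩, ?_⟩
  · -- Fn transitive → SFn transitive
    intro hF U V hUo hVo hUne hVne
    obtain ⟨χU, hχU⟩ := hUne
    obtain ⟨AU, rfl⟩ := sfnq_surjective χU
    obtain ⟨χV, hχV⟩ := hVne
    obtain ⟨AV, rfl⟩ := sfnq_surjective χV
    obtain ⟨k, B, hB1, hB2⟩ := hF (SFnQ X n ⁻¹' U) (SFnQ X n ⁻¹' V)
      (hUo.preimage continuous_sfnq) (hVo.preimage continuous_sfnq) ⟨AU, hχU⟩ ⟨AV, hχV⟩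
    refine ⟨k, ?_⟩
    unfold ZIterImage at hB1 ⊢
    by_cases hk : 0 ≤ k
    · rw [if_pos hk] at hB1 ⊢
      obtain ⟨C, hC, rfl⟩ := hB1
      exact ⟨SFnQ X n ((FnMap X n f)^[k.toNat] C),
        ⟨SFnQ X n C, hC, sfn_q_iter f k.toNat C⟩, hB2⟩
    · rw [if_neg hk] at hB1 ⊢
      refine ⟨SFnQ X n B, ?_, hB2⟩
      rw [Set.mem_preimage, sfn_q_iter]
      exact hB1
  · -- SFn transitive → Fn transitive
    intro hS U V hUo hVo hUne hVne
    have key : ∀ W : Set (Fn X n), IsOpen W → W.Nonempty → (W \ F1 X n).Nonempty := by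
      intro W hWo hWne
      obtain ⟨A, hA⟩ := hWne
      by_cases hA1 : A ∈ F1 X n
      · obtain ⟨x, hx⟩ := hA1
        obtain ⟨ε, hε, hball⟩ := Metric.isOpen_iff.1 hWo A hA
        obtain ⟨y, hyx, hyd⟩ := exists_close_ne x (by linarith : (0:ℝ) < ε/2)
        refine ⟨FnPair hn x y, hball ?_, ?_⟩
        · rw [mem_ball, fn_dist_eq, fnPair_coe, hx]
          have hle : hausdorffDist ({x, y} : Set X) ({x} : Set X) ≤ dist y x := by
            apply hausdorffDist_le_of_mem_dist dist_nonneg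
            · intro z hz
              rcases Set.mem_insert_iff.1 hz with rfl | hz2
              · exact ⟨z, Set.mem_singleton z, by simpa using dist_nonneg⟩
              · rw [Set.mem_singleton_iff] at hz2
                subst hz2
                exact ⟨x, Set.mem_singleton x, le_refl _⟩
            · intro z hz
              rw [Set.mem_singleton_iff] at hz
              subst hz
              exact ⟨z, Set.mem_insert z _, by simpa using dist_nonneg⟩
          linarith
        · rintro ⟨z, hz⟩
          rw [fnPair_coe] at hz
          have hxz : x = z := by rw [← Set.mem_singleton_iff, ← hz]; exact Set.mem_insert x _
          have hyz : y = z := by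
            rw [← Set.mem_singleton_iff, ← hz]
            exact Set.mem_insert_iff.2 (Or.inr (Set.mem_singleton y))
          exact hyx (hyz.trans hxz.symm)
      · exact ⟨A, hA, hA1⟩
    obtain ⟨A₀, hA₀U, hA₀1⟩ := key U hUo hUne
    obtain ⟨B₀, hB₀V, hB₀1⟩ := key V hVo hVne
    have hU'o : IsOpen (U \ F1 X n) := hUo.sdiff isClosed_F1
    have hV'o : IsOpen (V \ F1 X n) := hVo.sdiff isClosed_F1
    have hqUo : IsOpen (SFnQ X n '' (U \ F1 X n)) := isOpen_sfnq_image hU'o fun A hA => hA.2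
    have hqVo : IsOpen (SFnQ X n '' (V \ F1 X n)) := isOpen_sfnq_image hV'o fun A hA => hA.2
    obtain ⟨k, χ, hχ1, hχ2⟩ := hS _ _ hqUo hqVo
      ⟨_, A₀, ⟨hA₀U, hA₀1⟩, rfl⟩ ⟨_, B₀, ⟨hB₀V, hB₀1⟩, rfl⟩
    obtain ⟨A, ⟨hAV, hA1⟩, rfl⟩ := hχ2
    refine ⟨k, ?_⟩
    unfold ZIterImage at hχ1 ⊢
    by_cases hk : 0 ≤ k
    · rw [if_pos hk] at hχ1 ⊢
      obtain ⟨ψ, ⟨B, ⟨hBU, hB1⟩, rfl⟩, hψ⟩ := hχ1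
      rw [sfn_q_iter] at hψ
      rcases sfnq_exact hψ with heq | ⟨h1', h2'⟩
      · exact ⟨A, ⟨B, hBU, heq⟩, hAV⟩
      · exact absurd h2' hA1
    · rw [if_neg hk] at hχ1 ⊢
      rw [Set.mem_preimage, sfn_q_iter] at hχ1
      obtain ⟨B, ⟨hBU, hB1⟩, hψ⟩ := hχ1
      rcases sfnq_exact hψ with heq | ⟨h1', h2'⟩
      · exact ⟨A, by rw [Set.mem_preimage, ← heq]; exact hBU, hAV⟩
      · exact absurd h1' hB1
  · -- Fn transitive → f transitive
    intro hF U V hUo hVo hUne hVne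
    obtain ⟨x, hx⟩ := hUne
    obtain ⟨y, hy⟩ := hVne
    obtain ⟨k, B, hB1, hB2⟩ := hF {A : Fn X n | (A.1 : Set X) ⊆ U}
      {A : Fn X n | (A.1 : Set X) ⊆ V} (isOpen_fn_subsets hUo) (isOpen_fn_subsets hVo)
      ⟨FnSing hn1 x, by rw [Set.mem_setOf_eq, fnSing_coe]; simpa using hx⟩
      ⟨FnSing hn1 y, by rw [Set.mem_setOf_eq, fnSing_coe]; simpa using hy⟩
    refine ⟨k, ?_⟩
    unfold ZIterImage at hB1 ⊢
    by_cases hk : 0 ≤ k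
    · rw [if_pos hk] at hB1 ⊢
      obtain ⟨C, hC, rfl⟩ := hB1
      obtain ⟨z, hz⟩ := C.1.nonempty
      refine ⟨f^[k.toNat] z, ⟨z, hC hz, rfl⟩, ?_⟩
      apply hB2
      rw [fnmap_iter_coe]
      exact ⟨z, hz, rfl⟩
    · rw [if_neg hk] at hB1 ⊢
      obtain ⟨z, hz⟩ := B.1.nonempty
      refine ⟨z, ?_, hB2 hz⟩
      rw [Set.mem_preimage]
      exact hB1 (show f^[(-k).toNat] z ∈ _ by rw [fnmap_iter_coe]; exact ⟨z, hz, rfl⟩)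
end

section
/- Let X be a continuum (a compact connected metric space with more than one point), let n ≥ 2 be an integer, and let f : X → X be a continuous map. Then F_n(f) is Z-transitive if and only if f is weakly mixing. -/
open Metric Set TopologicalSpace

variable (X : Type*) [MetricSpace X] (n : ℕ)

/-- `g` is weakly mixing. -/
def WeaklyMixing {Z : Type*} [TopologicalSpace Z] (g : Z → Z) : Prop :=
  ∀ U₁ U₂ V₁ V₂ : Set Z, IsOpen U₁ → IsOpen U₂ → IsOpen V₁ → IsOpen V₂ →
    U₁.Nonempty → U₂.Nonempty → V₁.Nonempty → V₂.Nonempty →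
    ∃ k : ℕ, 0 < k ∧ (g^[k] '' U₁ ∩ V₁).Nonempty ∧ (g^[k] '' U₂ ∩ V₂).Nonempty


/-!
If `f` is weakly mixing, then by Furstenberg's intersection lemma every finite product
`f × ⋯ × f` is transitive, and `F_n(f)` is a factor of `f^{×n}` through
`(x₁, …, xₙ) ↦ {x₁, …, xₙ}`, so it is transitive as well.

Conversely, let `F_n(f)` be Z-transitive and suppose that no single iterate `f^k` sends points of
the open set `A` into both `C₁` and `C₂`. Z-transitivity for the Vietoris sets `⟨C₁, C₂⟩` and `⟨A⟩` (whose
backward alternative is excluded by that assumption) gives a time `j` at which nonempty open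
`W₁ ⊆ C₁` and `W₂ ⊆ C₂` both land in `A`; from then on, no two points of `W₁ ∪ W₂` are in `C₁`
and `C₂` at the same time. As `X` has no isolated points, graphs of maps have empty interior in
`X × X`, so there are nonempty open `Qᵢ, Sᵢ ⊆ Wᵢ` such that no point of `Q₁ ∪ Q₂` is sent into
`S₁ ∪ S₂` (or back) in fewer than `j` steps. Then Z-transitivity fails for `⟨Q₁, Q₂⟩` and
`⟨S₁, S₂⟩`. So every `A` reaches any `C₁` and `C₂` at a common time, which gives weak mixing.
-/

open Filter Topology Function

section Dynamics

variable {Z : Type*} {g : Z → Z}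

def hittingTimes (g : Z → Z) (U V : Set Z) : Set ℕ := {k | (g^[k] '' U ∩ V).Nonempty}

theorem mem_hittingTimes_of_add_mem {U V : Set Z} {j k : ℕ}
    (h : j + k ∈ hittingTimes g (g^[j] ⁻¹' U) V) : k ∈ hittingTimes g U V := by
  obtain ⟨_, ⟨x, hx, rfl⟩, hxV⟩ := h
  exact ⟨_, ⟨g^[j] x, hx, rfl⟩, by rwa [← iterate_add_apply, add_comm]⟩

theorem hittingTimes_inter_eq_empty_of_mapsTo {A C₁ C₂ P R₁ R₂ : Set Z} {j : ℕ}
    (H : hittingTimes g A C₁ ∩ hittingTimes g A C₂ = ∅) (hP : MapsTo g^[j] P A) (hR₁ : R₁ ⊆ C₁)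
    (hR₂ : R₂ ⊆ C₂) (hPR : ∀ m < j, m ∉ hittingTimes g P R₁) :
    hittingTimes g P R₁ ∩ hittingTimes g P R₂ = ∅ := by
  refine eq_empty_of_forall_notMem fun k ⟨hk₁, ⟨_, ⟨y, hy, rfl⟩, hyR⟩⟩ => ?_
  obtain ⟨_, ⟨x, hx, rfl⟩, hxR⟩ := hk₁
  rcases lt_or_ge k j with hk | hk
  · exact hPR k hk ⟨_, mem_image_of_mem _ hx, hxR⟩
  · obtain ⟨i, rfl⟩ := Nat.exists_eq_add_of_le hk
    exact eq_empty_iff_forall_notMem.1 H i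
      ⟨mem_hittingTimes_of_add_mem ⟨_, mem_image_of_mem _ (hP hx), hR₁ hxR⟩,
        mem_hittingTimes_of_add_mem ⟨_, mem_image_of_mem _ (hP hy), hR₂ hyR⟩⟩

variable [TopologicalSpace Z]

def TopTransitive (g : Z → Z) : Prop :=
  ∀ U V : Set Z, IsOpen U → IsOpen V → U.Nonempty → V.Nonempty → (hittingTimes g U V).Nonempty

theorem ZTransitive.exists_hittingTimes (hg : ZTransitive g) {U V : Set Z} (hU : IsOpen U)
    (hV : IsOpen V) (hU' : U.Nonempty) (hV' : V.Nonempty) :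
    ∃ k, k ∈ hittingTimes g U V ∨ k ∈ hittingTimes g V U := by
  obtain ⟨k, hk⟩ := hg U V hU hV hU' hV'
  unfold ZIterImage at hk
  split_ifs at hk
  · exact ⟨k.toNat, Or.inl hk⟩
  · refine ⟨(-k).toNat, Or.inr ?_⟩
    rwa [hittingTimes, mem_ofPred_eq, image_inter_nonempty_iff, inter_comm]

theorem TopTransitive.zTransitive (hg : TopTransitive g) : ZTransitive g := by
  intro U V hU hV hU' hV'
  obtain ⟨k, hk⟩ := hg U V hU hV hU' hV'
  refine ⟨k, ?_⟩
  rwa [ZIterImage, if_pos (Int.natCast_nonneg k), Int.toNat_natCast]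

theorem TopTransitive.of_semiconj {Y : Type*} [TopologicalSpace Y] {h : Y → Y} {π : Y → Z}
    (hh : TopTransitive h) (hπ : Continuous π) (hπs : Surjective π) (hsc : Semiconj π h g) :
    TopTransitive g := by
  intro U V hU hV hU' hV'
  obtain ⟨k, _, ⟨y, hy, rfl⟩, hyV⟩ := hh _ _ (hU.preimage hπ) (hV.preimage hπ)
    (hU'.preimage hπs) (hV'.preimage hπs)
  exact ⟨k, π (h^[k] y), ⟨π y, hy, (hsc.iterate_right k y).symm⟩, hyV⟩

end Dynamics

section WeaklyMixing

variable {X : Type*} [TopologicalSpace X] {f : X → X}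

theorem WeaklyMixing.exists_hittingTimes_subset_inter (hwm : WeaklyMixing f) (hf : Continuous f)
    {U₁ V₁ U₂ V₂ : Set X} (hU₁ : IsOpen U₁) (hV₁ : IsOpen V₁) (hU₂ : IsOpen U₂) (hV₂ : IsOpen V₂)
    (hU₁' : U₁.Nonempty) (hV₁' : V₁.Nonempty) (hU₂' : U₂.Nonempty) (hV₂' : V₂.Nonempty) :
    ∃ U V, IsOpen U ∧ IsOpen V ∧ U.Nonempty ∧ V.Nonempty ∧
      hittingTimes f U V ⊆ hittingTimes f U₁ V₁ ∩ hittingTimes f U₂ V₂ := by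
  obtain ⟨k₀, -, ⟨_, ⟨x, hx, rfl⟩, hxU₂⟩, ⟨_, ⟨y, hy, rfl⟩, hyV₂⟩⟩ :=
    hwm U₁ V₁ U₂ V₂ hU₁ hV₁ hU₂ hV₂ hU₁' hV₁' hU₂' hV₂'
  refine ⟨U₁ ∩ f^[k₀] ⁻¹' U₂, V₁ ∩ f^[k₀] ⁻¹' V₂, hU₁.inter (hU₂.preimage (hf.iterate k₀)),
    hV₁.inter (hV₂.preimage (hf.iterate k₀)), ⟨x, hx, hxU₂⟩, ⟨y, hy, hyV₂⟩, ?_⟩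
  rintro k ⟨_, ⟨z, hz, rfl⟩, hzV⟩
  refine ⟨⟨_, mem_image_of_mem _ hz.1, hzV.1⟩, ⟨_, mem_image_of_mem _ hz.2, ?_⟩⟩
  rw [Commute.iterate_iterate_self f k k₀ z]
  exact hzV.2

theorem WeaklyMixing.exists_hittingTimes_subset_biInter (hwm : WeaklyMixing f)
    (hf : Continuous f) {ι : Type*} {U V : ι → Set X} (hU : ∀ i, IsOpen (U i))
    (hV : ∀ i, IsOpen (V i)) (hU' : ∀ i, (U i).Nonempty) (hV' : ∀ i, (V i).Nonempty)
    {s : Finset ι} (hs : s.Nonempty) :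
    ∃ U₀ V₀, IsOpen U₀ ∧ IsOpen V₀ ∧ U₀.Nonempty ∧ V₀.Nonempty ∧
      hittingTimes f U₀ V₀ ⊆ ⋂ i ∈ s, hittingTimes f (U i) (V i) := by
  classical
  induction hs using Finset.Nonempty.cons_induction with
  | singleton a => exact ⟨U a, V a, hU a, hV a, hU' a, hV' a, by simp⟩
  | cons a s ha _ ih =>
    obtain ⟨U₀, V₀, hU₀, hV₀, hU₀', hV₀', hsub⟩ := ih
    obtain ⟨U₁, V₁, hU₁, hV₁, hU₁', hV₁', hsub₁⟩ :=
      hwm.exists_hittingTimes_subset_inter hf (hU a) (hV a) hU₀ hV₀ (hU' a) (hV' a) hU₀' hV₀'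
    refine ⟨U₁, V₁, hU₁, hV₁, hU₁', hV₁', fun k hk => ?_⟩
    rw [Finset.cons_eq_insert, Finset.set_biInter_insert]
    exact ⟨(hsub₁ hk).1, hsub (hsub₁ hk).2⟩

theorem WeaklyMixing.topTransitive_piMap (hwm : WeaklyMixing f) (hf : Continuous f)
    {ι : Type*} [Finite ι] [Nonempty ι] : TopTransitive (Pi.map fun _ : ι => f) := by
  cases nonempty_fintype ι
  intro U V hU hV ⟨x, hx⟩ ⟨y, hy⟩
  obtain ⟨u, hu, huU⟩ := isOpen_pi_iff'.1 hU x hx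
  obtain ⟨v, hv, hvV⟩ := isOpen_pi_iff'.1 hV y hy
  obtain ⟨U₀, V₀, hU₀, hV₀, hU₀', hV₀', hsub⟩ :=
    hwm.exists_hittingTimes_subset_biInter hf (fun i => (hu i).1) (fun i => (hv i).1)
      (fun i => ⟨x i, (hu i).2⟩) (fun i => ⟨y i, (hv i).2⟩) Finset.univ_nonempty
  obtain ⟨k, -, hk, -⟩ := hwm U₀ U₀ V₀ V₀ hU₀ hU₀ hV₀ hV₀ hU₀' hU₀' hV₀' hV₀'
  have hki : ∀ i, ∃ z ∈ u i, f^[k] z ∈ v i := fun i => by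
    obtain ⟨_, ⟨z, hz, rfl⟩, hzv⟩ := mem_iInter₂.1 (hsub hk) i (Finset.mem_univ i)
    exact ⟨z, hz, hzv⟩
  choose z hzu hzv using hki
  exact ⟨k, _, ⟨z, huU fun i _ => hzu i, rfl⟩, hvV fun i _ => by simpa using hzv i⟩

end WeaklyMixing

section ProductBoxes

variable {X Y : Type*} [TopologicalSpace X] [TopologicalSpace Y]

theorem Dense.exists_prod_subset {O : Set (X × Y)} (hO : Dense O) (hO' : IsOpen O) {U : Set X}
    {V : Set Y} (hU : IsOpen U) (hV : IsOpen V) (hU' : U.Nonempty) (hV' : V.Nonempty) :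
    ∃ U₀ ⊆ U, ∃ V₀ ⊆ V, IsOpen U₀ ∧ IsOpen V₀ ∧ U₀.Nonempty ∧ V₀.Nonempty ∧ U₀ ×ˢ V₀ ⊆ O := by
  obtain ⟨p, ⟨hpU, hpV⟩, hpO⟩ := hO.inter_open_nonempty _ (hU.prod hV) (hU'.prod hV')
  obtain ⟨u, v, hu, hv, hpu, hpv, huv⟩ := isOpen_prod_iff.1 hO' p.1 p.2 hpO
  exact ⟨u ∩ U, inter_subset_right, v ∩ V, inter_subset_right, hu.inter hU, hv.inter hV,
    ⟨p.1, hpu, hpU⟩, ⟨p.2, hpv, hpV⟩, (prod_mono inter_subset_left inter_subset_left).trans huv⟩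

theorem Dense.exists_union_prod_subset {O : Set (X × Y)} (hO : Dense O) (hO' : IsOpen O)
    {U₁ U₂ : Set X} {V₁ V₂ : Set Y} (hU₁ : IsOpen U₁) (hU₂ : IsOpen U₂) (hV₁ : IsOpen V₁)
    (hV₂ : IsOpen V₂) (hU₁' : U₁.Nonempty) (hU₂' : U₂.Nonempty) (hV₁' : V₁.Nonempty)
    (hV₂' : V₂.Nonempty) :
    ∃ Q₁ ⊆ U₁, ∃ Q₂ ⊆ U₂, ∃ S₁ ⊆ V₁, ∃ S₂ ⊆ V₂, IsOpen Q₁ ∧ IsOpen Q₂ ∧ IsOpen S₁ ∧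
      IsOpen S₂ ∧ Q₁.Nonempty ∧ Q₂.Nonempty ∧ S₁.Nonempty ∧ S₂.Nonempty ∧
      (Q₁ ∪ Q₂) ×ˢ (S₁ ∪ S₂) ⊆ O := by
  obtain ⟨A₁, hA₁U, B₁, hB₁V, hA₁, hB₁, hA₁', hB₁', h₁₁⟩ :=
    hO.exists_prod_subset hO' hU₁ hV₁ hU₁' hV₁'
  obtain ⟨A₂, hA₂A, B₂, hB₂V, hA₂, hB₂, hA₂', hB₂', h₁₂⟩ :=
    hO.exists_prod_subset hO' hA₁ hV₂ hA₁' hV₂'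
  obtain ⟨A₃, hA₃U, B₃, hB₃B, hA₃, hB₃, hA₃', hB₃', h₂₁⟩ :=
    hO.exists_prod_subset hO' hU₂ hB₁ hU₂' hB₁'
  obtain ⟨A₄, hA₄A, B₄, hB₄B, hA₄, hB₄, hA₄', hB₄', h₂₂⟩ :=
    hO.exists_prod_subset hO' hA₃ hB₂ hA₃' hB₂'
  refine ⟨A₂, hA₂A.trans hA₁U, A₄, hA₄A.trans hA₃U, B₃, hB₃B.trans hB₁V, B₄, hB₄B.trans hB₂V,
    hA₂, hA₄, hB₃, hB₄, hA₂', hA₄', hB₃', hB₄', ?_⟩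
  rintro ⟨x, y⟩ ⟨hx | hx, hy | hy⟩
  · exact h₁₁ ⟨hA₂A hx, hB₃B hy⟩
  · exact h₁₂ ⟨hx, hB₄B hy⟩
  · exact h₂₁ ⟨hA₄A hx, hy⟩
  · exact h₂₂ ⟨hx, hy⟩

end ProductBoxes

section IterateApart

variable {X : Type*}

def iterateApart (f : X → X) (N : ℕ) : Set (X × X) :=
  {p | ∀ m < N, f^[m] p.1 ≠ p.2 ∧ f^[m] p.2 ≠ p.1}

theorem iterateApart_eq_biInter (f : X → X) (N : ℕ) : iterateApart f N =
    ⋂ m ∈ Iio N, {p : X × X | f^[m] p.1 ≠ p.2} ∩ Prod.swap ⁻¹' {p | f^[m] p.1 ≠ p.2} := by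
  ext; simp [iterateApart]

theorem notMem_hittingTimes_of_prod_subset_iterateApart {f : X → X} {N m : ℕ} {P R : Set X}
    (h : P ×ˢ R ⊆ iterateApart f N) (hm : m < N) :
    m ∉ hittingTimes f P R ∧ m ∉ hittingTimes f R P := by
  constructor <;> rintro ⟨_, ⟨x, hx, rfl⟩, hxR⟩
  exacts [(h (mk_mem_prod hx hxR) m hm).1 rfl, (h (mk_mem_prod hxR hx) m hm).2 rfl]

variable [TopologicalSpace X]

theorem dense_setOf_apply_ne [∀ x : X, (𝓝[≠] x).NeBot] (g : X → X) :
    Dense {p : X × X | g p.1 ≠ p.2} := by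
  refine dense_iff_inter_open.2 fun U hU ⟨p, hp⟩ => ?_
  obtain ⟨u, v, -, hv, hpu, hpv, huv⟩ := isOpen_prod_iff.1 hU p.1 p.2 hp
  obtain ⟨y, hyv, hy⟩ := (dense_compl_singleton (g p.1)).inter_open_nonempty v hv ⟨p.2, hpv⟩
  exact ⟨(p.1, y), huv ⟨hpu, hyv⟩, Ne.symm hy⟩

variable [T2Space X] {f : X → X}

theorem isOpen_setOf_iterate_ne_and (hf : Continuous f) (m : ℕ) :
    IsOpen ({p : X × X | f^[m] p.1 ≠ p.2} ∩ Prod.swap ⁻¹' {p | f^[m] p.1 ≠ p.2}) := by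
  have h : IsOpen {p : X × X | f^[m] p.1 ≠ p.2} :=
    isOpen_ne_fun ((hf.iterate m).comp continuous_fst) continuous_snd
  exact h.inter (h.preimage continuous_swap)

theorem isOpen_iterateApart (hf : Continuous f) (N : ℕ) : IsOpen (iterateApart f N) := by
  rw [iterateApart_eq_biInter]
  exact (finite_Iio N).isOpen_biInter fun m _ => isOpen_setOf_iterate_ne_and hf m

theorem dense_iterateApart [∀ x : X, (𝓝[≠] x).NeBot] (hf : Continuous f) (N : ℕ) :
    Dense (iterateApart f N) := by
  rw [iterateApart_eq_biInter, ← sInter_image]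
  refine ((finite_Iio N).image _).dense_sInter ?_ ?_ <;> rintro _ ⟨m, -, rfl⟩
  · exact isOpen_setOf_iterate_ne_and hf m
  · exact (dense_setOf_apply_ne _).inter_of_isOpen_left
      ((dense_setOf_apply_ne _).preimage (Homeomorph.prodComm X X).isOpenMap)
      (isOpen_ne_fun ((hf.iterate m).comp continuous_fst) continuous_snd)

theorem weaklyMixing_of_hittingTimes_inter_nonempty [∀ x : X, (𝓝[≠] x).NeBot] (hf : Continuous f)
    (h : ∀ A C₁ C₂ : Set X, IsOpen A → IsOpen C₁ → IsOpen C₂ → A.Nonempty → C₁.Nonempty →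
      C₂.Nonempty → (hittingTimes f A C₁ ∩ hittingTimes f A C₂).Nonempty) :
    WeaklyMixing f := by
  intro U₁ U₂ V₁ V₂ hU₁ hU₂ hV₁ hV₂ hU₁' hU₂' hV₁' hV₂'
  -- `U × V ⊆ iterateApart f 1` makes `U` and `V` disjoint, which forces the time `k` to be positive
  obtain ⟨U, hUU₁, V, hVV₁, hU, hV, hU', hV', hUV⟩ :=
    (dense_iterateApart hf 1).exists_prod_subset (isOpen_iterateApart hf 1) hU₁ hV₁ hU₁' hV₁'
  obtain ⟨k₁, ⟨_, ⟨x₁, hx₁, rfl⟩, hx₁U₂⟩, ⟨_, ⟨x₂, hx₂, rfl⟩, hx₂V₂⟩⟩ :=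
    h U U₂ V₂ hU hU₂ hV₂ hU' hU₂' hV₂'
  obtain ⟨k, ⟨_, ⟨z, hz, rfl⟩, hzV₂⟩, ⟨_, ⟨w, hw, rfl⟩, hwV⟩⟩ :=
    h (U ∩ f^[k₁] ⁻¹' U₂) (U ∩ f^[k₁] ⁻¹' V₂) V (hU.inter (hU₂.preimage (hf.iterate k₁)))
      (hU.inter (hV₂.preimage (hf.iterate k₁))) hV ⟨x₁, hx₁, hx₁U₂⟩ ⟨x₂, hx₂, hx₂V₂⟩ hV'
  have hk : 0 < k := Nat.pos_of_ne_zero <| by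
    rintro rfl
    exact (notMem_hittingTimes_of_prod_subset_iterateApart hUV zero_lt_one).1
      ⟨w, mem_image_of_mem _ hw.1, hwV⟩
  refine ⟨k, hk, ⟨_, mem_image_of_mem _ (hUU₁ hw.1), hVV₁ hwV⟩, ⟨_, mem_image_of_mem _ hz.2, ?_⟩⟩
  rw [Commute.iterate_iterate_self f k k₁ z]
  exact hzV₂.2

end IterateApart

theorem exists_fin_range_eq {X : Type*} {n : ℕ} {s : Set X} (hs : s.Finite) (hne : s.Nonempty)
    (h : s.ncard ≤ n) : ∃ x : Fin n → X, range x = s := by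
  obtain ⟨t, rfl⟩ := hs.exists_finset_coe
  have : Nonempty t := hne.to_subtype
  let e : t ↪ Fin n := t.equivFin.toEmbedding.trans (Fin.castLEEmb (by simpa using h))
  refine ⟨(↑) ∘ invFun e, ?_⟩
  rw [range_comp, (invFun_surjective e.injective).range_eq, image_univ, Subtype.range_coe]

section SymmetricProduct

variable {X : Type*} [MetricSpace X] {n : ℕ}

theorem coe_fnMap_iterate (f : X → X) (k : ℕ) (A : Fn X n) :
    (((FnMap X n f)^[k] A).1 : Set X) = f^[k] '' A.1 := by
  induction k with
  | zero => simp
  | succ k ih => rw [iterate_succ_apply', iterate_succ', image_comp, ← ih]; rfl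

noncomputable def Fn.ofTuple [NeZero n] (x : Fin n → X) : Fn X n :=
  ⟨⟨⟨range x, (finite_range x).isCompact⟩, range_nonempty x⟩, finite_range x, by
    simpa using ncard_image_le (f := x) (s := univ) finite_univ⟩

theorem Fn.continuous_ofTuple [NeZero n] : Continuous (Fn.ofTuple : (Fin n → X) → Fn X n) := by
  let _ : TopologicalSpace (Set X) := .vietoris X
  refine Continuous.subtype_mk (NonemptyCompacts.isEmbedding_coe.continuous_iff.2 ?_) _
  exact vietoris.continuous_range_of_finite

theorem Fn.ofTuple_surjective [NeZero n] : Surjective (Fn.ofTuple : (Fin n → X) → Fn X n) := by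
  rintro ⟨A, hfin, hcard⟩
  obtain ⟨x, hx⟩ := exists_fin_range_eq hfin A.nonempty hcard
  exact ⟨x, Subtype.ext (NonemptyCompacts.ext hx)⟩

theorem Fn.semiconj_ofTuple [NeZero n] (f : X → X) :
    Semiconj Fn.ofTuple (Pi.map fun _ : Fin n => f) (FnMap X n f) := fun x =>
  Subtype.ext (NonemptyCompacts.ext (range_comp f x))

theorem WeaklyMixing.zTransitive_fnMap [NeZero n] {f : X → X} (hwm : WeaklyMixing f)
    (hf : Continuous f) : ZTransitive (FnMap X n f) :=
  ((hwm.topTransitive_piMap hf).of_semiconj Fn.continuous_ofTuple Fn.ofTuple_surjective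
    (Fn.semiconj_ofTuple f)).zTransitive

-- the Vietoris set `⟨P₁, P₂⟩`; the set `⟨P⟩` of the header is `vietorisPair n P P`
def vietorisPair (n : ℕ) (P₁ P₂ : Set X) : Set (Fn X n) :=
  {A | (A.1 : Set X) ⊆ P₁ ∪ P₂ ∧ ((A.1 : Set X) ∩ P₁).Nonempty ∧ ((A.1 : Set X) ∩ P₂).Nonempty}

theorem isOpen_vietorisPair {P₁ P₂ : Set X} (h₁ : IsOpen P₁) (h₂ : IsOpen P₂) :
    IsOpen (vietorisPair n P₁ P₂) :=
  ((NonemptyCompacts.isOpen_subsets_of_isOpen (h₁.union h₂)).inter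
    ((NonemptyCompacts.isOpen_inter_nonempty_of_isOpen h₁).inter
      (NonemptyCompacts.isOpen_inter_nonempty_of_isOpen h₂))).preimage continuous_subtype_val

theorem vietorisPair_nonempty (hn : 2 ≤ n) {P₁ P₂ : Set X} (h₁ : P₁.Nonempty)
    (h₂ : P₂.Nonempty) : (vietorisPair n P₁ P₂).Nonempty := by
  obtain ⟨x, hx⟩ := h₁
  obtain ⟨y, hy⟩ := h₂
  refine ⟨⟨⟨⟨{x, y}, ((finite_singleton y).insert x).isCompact⟩, insert_nonempty x {y}⟩,
    (finite_singleton y).insert x,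
    (ncard_insert_le x {y}).trans (by simpa using hn)⟩, ?_, ⟨x, by simp, hx⟩, ⟨y, by simp, hy⟩⟩
  exact insert_subset (Or.inl hx) (singleton_subset_iff.2 (Or.inr hy))

theorem hittingTimes_fnMap_vietorisPair_subset (f : X → X) (P₁ P₂ R₁ R₂ : Set X) :
    hittingTimes (FnMap X n f) (vietorisPair n P₁ P₂) (vietorisPair n R₁ R₂) ⊆
      (hittingTimes f (P₁ ∪ P₂) R₁ ∩ hittingTimes f (P₁ ∪ P₂) R₂) ∩
        (hittingTimes f P₁ (R₁ ∪ R₂) ∩ hittingTimes f P₂ (R₁ ∪ R₂)) := by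
  rintro k ⟨_, ⟨A, ⟨hAP, ⟨a₁, ha₁, ha₁P⟩, ⟨a₂, ha₂, ha₂P⟩⟩, rfl⟩, hR, hb₁, hb₂⟩
  simp only [coe_fnMap_iterate] at hR hb₁ hb₂
  obtain ⟨_, ⟨c₁, hc₁, rfl⟩, hc₁R⟩ := hb₁
  obtain ⟨_, ⟨c₂, hc₂, rfl⟩, hc₂R⟩ := hb₂
  exact ⟨⟨⟨_, mem_image_of_mem _ (hAP hc₁), hc₁R⟩, ⟨_, mem_image_of_mem _ (hAP hc₂), hc₂R⟩⟩,
    ⟨_, mem_image_of_mem _ ha₁P, hR (mem_image_of_mem _ ha₁)⟩,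
    ⟨_, mem_image_of_mem _ ha₂P, hR (mem_image_of_mem _ ha₂)⟩⟩

theorem hittingTimes_inter_nonempty_of_zTransitive_fnMap [∀ x : X, (𝓝[≠] x).NeBot] {f : X → X}
    (hZ : ZTransitive (FnMap X n f)) (hf : Continuous f) (hn : 2 ≤ n) {A C₁ C₂ : Set X}
    (hA : IsOpen A) (hC₁ : IsOpen C₁) (hC₂ : IsOpen C₂) (hA' : A.Nonempty) (hC₁' : C₁.Nonempty)
    (hC₂' : C₂.Nonempty) :
    (hittingTimes f A C₁ ∩ hittingTimes f A C₂).Nonempty := by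
  by_contra H
  rw [not_nonempty_iff_eq_empty] at H
  obtain ⟨j, hj₁, hj₂⟩ : (hittingTimes f C₁ A ∩ hittingTimes f C₂ A).Nonempty := by
    obtain ⟨k, hk | hk⟩ := hZ.exists_hittingTimes (isOpen_vietorisPair hC₁ hC₂)
      (isOpen_vietorisPair hA hA) (vietorisPair_nonempty hn hC₁' hC₂')
      (vietorisPair_nonempty hn hA' hA')
    · have hk' := (hittingTimes_fnMap_vietorisPair_subset f C₁ C₂ A A hk).2
      rw [union_self] at hk'
      exact ⟨k, hk'⟩
    · have hk' := (hittingTimes_fnMap_vietorisPair_subset f A A C₁ C₂ hk).1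
      rw [union_self, H] at hk'
      exact hk'.elim
  have hW₁ : IsOpen (C₁ ∩ f^[j] ⁻¹' A) := hC₁.inter (hA.preimage (hf.iterate j))
  have hW₂ : IsOpen (C₂ ∩ f^[j] ⁻¹' A) := hC₂.inter (hA.preimage (hf.iterate j))
  have hW₁' : (C₁ ∩ f^[j] ⁻¹' A).Nonempty := image_inter_nonempty_iff.1 hj₁
  have hW₂' : (C₂ ∩ f^[j] ⁻¹' A).Nonempty := image_inter_nonempty_iff.1 hj₂
  obtain ⟨Q₁, hQ₁, Q₂, hQ₂, S₁, hS₁, S₂, hS₂, hQ₁o, hQ₂o, hS₁o, hS₂o, hQ₁', hQ₂', hS₁', hS₂',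
    hQS⟩ :=
    (dense_iterateApart hf j).exists_union_prod_subset (isOpen_iterateApart hf j)
      hW₁ hW₂ hW₁ hW₂ hW₁' hW₂' hW₁' hW₂'
  have hmaps {P₁ P₂ : Set X} (h₁ : P₁ ⊆ C₁ ∩ f^[j] ⁻¹' A) (h₂ : P₂ ⊆ C₂ ∩ f^[j] ⁻¹' A) :
      MapsTo f^[j] (P₁ ∪ P₂) A :=
    union_subset (h₁.trans inter_subset_right) (h₂.trans inter_subset_right)
  obtain ⟨k, hk | hk⟩ := hZ.exists_hittingTimes (isOpen_vietorisPair hQ₁o hQ₂o)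
    (isOpen_vietorisPair hS₁o hS₂o) (vietorisPair_nonempty hn hQ₁' hQ₂')
    (vietorisPair_nonempty hn hS₁' hS₂')
  · have hk' := (hittingTimes_fnMap_vietorisPair_subset f _ _ _ _ hk).1
    rwa [hittingTimes_inter_eq_empty_of_mapsTo H (hmaps hQ₁ hQ₂) (hS₁.trans inter_subset_left)
      (hS₂.trans inter_subset_left) fun m hm => (notMem_hittingTimes_of_prod_subset_iterateApart
        ((prod_mono_right subset_union_left).trans hQS) hm).1] at hk'
  · have hk' := (hittingTimes_fnMap_vietorisPair_subset f _ _ _ _ hk).1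
    rwa [hittingTimes_inter_eq_empty_of_mapsTo H (hmaps hS₁ hS₂) (hQ₁.trans inter_subset_left)
      (hQ₂.trans inter_subset_left) fun m hm => (notMem_hittingTimes_of_prod_subset_iterateApart
        ((prod_mono_left subset_union_left).trans hQS) hm).2] at hk'

end SymmetricProduct

theorem stmt4_general (X : Type*) [MetricSpace X] [ConnectedSpace X] [Nontrivial X]
    (n : ℕ) (hn : 2 ≤ n) (f : X → X) (hf : Continuous f) :
    ZTransitive (FnMap X n f) ↔ WeaklyMixing f := by
  have : NeZero n := ⟨by omega⟩
  exact ⟨fun hZ => weaklyMixing_of_hittingTimes_inter_nonempty hf fun _ _ _ =>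
    hittingTimes_inter_nonempty_of_zTransitive_fnMap hZ hf hn, fun hwm => hwm.zTransitive_fnMap hf⟩

theorem stmt4 (X : Type*) [MetricSpace X] [CompactSpace X] [ConnectedSpace X] [Nontrivial X]
    (n : ℕ) (hn : 2 ≤ n) (f : X → X) (hf : Continuous f) :
    ZTransitive (FnMap X n f) ↔ WeaklyMixing f :=
  stmt4_general X n hn f hf
end

section
/- Let X be a compactum (a compact perfect metric space with more than one point), let n ≥ 2 be an integer, let f : X → X be a continuous map, and let A ∈ F_n(X). If every x ∈ A is a quasi-periodic point of f, then A is a quasi-periodic point of F_n(f); and if A is a quasi-periodic point of F_n(f), then q(A) is a quasi-periodic point of SF_n(f). -/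
open Metric Set TopologicalSpace

variable (X : Type*) [MetricSpace X] (n : ℕ)

/-- `z` is a quasi-periodic point of `g`. -/
def QuasiPeriodicPt {Z : Type*} [TopologicalSpace Z] (g : Z → Z) (z : Z) : Prop :=
  ∀ U : Set Z, IsOpen U → z ∈ U → ∃ m : ℕ, 0 < m ∧ ∀ k : ℕ, g^[k * m] z ∈ U

lemma FnMap_iterate_carrier {X : Type*} [MetricSpace X] {n : ℕ} (f : X → X)
    (A : Fn X n) (j : ℕ) :
    (((FnMap X n f)^[j] A).1 : Set X) = f^[j] '' (A.1 : Set X) := by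
  induction j with
  | zero => simp
  | succ j ih =>
      rw [Function.iterate_succ_apply', Function.iterate_succ', Set.image_comp]
      show f '' (((FnMap X n f)^[j] A).1 : Set X) = _
      rw [ih]

lemma SFnMap_iterate {X : Type*} [MetricSpace X] {n : ℕ} (f : X → X)
    (A : Fn X n) (j : ℕ) :
    (SFnMap X n f)^[j] (SFnQ X n A) = SFnQ X n ((FnMap X n f)^[j] A) := by
  induction j with
  | zero => rfl
  | succ j ih =>
      rw [Function.iterate_succ_apply', Function.iterate_succ_apply', ih]
      rfl

theorem stmt5 (X : Type*) [MetricSpace X] [CompactSpace X] [Nontrivial X]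
    (hX : Perfect (Set.univ : Set X))
    (n : ℕ) (hn : 2 ≤ n) (f : X → X) (hf : Continuous f) (A : Fn X n) :
    ((∀ x ∈ (A.1 : Set X), QuasiPeriodicPt f x) → QuasiPeriodicPt (FnMap X n f) A) ∧
    (QuasiPeriodicPt (FnMap X n f) A → QuasiPeriodicPt (SFnMap X n f) (SFnQ X n A)) := by
  constructor
  · intro h U hU hAU
    rcases Metric.isOpen_iff.1 hU A hAU with ⟨ε, hε, hball⟩
    have key : ∀ x : X, x ∈ (A.1 : Set X) →
        ∃ m : ℕ, 0 < m ∧ ∀ k : ℕ, dist (f^[k * m] x) x < ε / 2 := by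
      intro x hx
      rcases h x hx (Metric.ball x (ε / 2)) Metric.isOpen_ball
        (Metric.mem_ball_self (by linarith)) with ⟨m, hm, hk⟩
      exact ⟨m, hm, fun k => hk k⟩
    choose! m hm1 hm2 using key
    set S : Finset X := A.2.1.toFinset with hS
    have hSmem : ∀ x, x ∈ S ↔ x ∈ (A.1 : Set X) := fun x => A.2.1.mem_toFinset
    refine ⟨∏ x ∈ S, m x, Finset.prod_pos (fun x hx => hm1 x ((hSmem x).1 hx)), ?_⟩
    intro k
    apply hball
    have hdist : ∀ x ∈ (A.1 : Set X),
        dist (f^[k * ∏ x ∈ S, m x] x) x ≤ ε / 2 := by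
      intro x hx
      obtain ⟨c, hc⟩ := Finset.dvd_prod_of_mem m ((hSmem x).2 hx)
      have : k * ∏ x ∈ S, m x = (k * c) * m x := by rw [hc]; ring
      rw [this]
      exact (hm2 x hx (k * c)).le
    have hne : (A.1 : Set X).Nonempty := A.1.nonempty
    have hd : dist ((FnMap X n f)^[k * ∏ x ∈ S, m x] A) A < ε := by
      rw [Subtype.dist_eq, NonemptyCompacts.dist_eq, FnMap_iterate_carrier]
      have hle : hausdorffDist (f^[k * ∏ x ∈ S, m x] '' (A.1 : Set X))
          ((A.1 : Set X)) ≤ ε / 2 := by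
        apply Metric.hausdorffDist_le_of_mem_dist (by linarith)
        · rintro y ⟨x, hx, rfl⟩
          exact ⟨x, hx, hdist x hx⟩
        · intro x hx
          exact ⟨f^[k * ∏ x ∈ S, m x] x, Set.mem_image_of_mem _ hx,
            by rw [dist_comm]; exact hdist x hx⟩
      linarith
    exact Metric.mem_ball'.2 (by rwa [dist_comm] at hd)
  · intro h U hU hAU
    have hq : Continuous (SFnQ X n) := continuous_quotient_mk'
    rcases h (SFnQ X n ⁻¹' U) (hU.preimage hq) hAU with ⟨m, hm, hk⟩
    refine ⟨m, hm, fun k => ?_⟩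
    rw [SFnMap_iterate]
    exact hk k
end

section
/- Let X be a compactum (a compact perfect metric space with more than one point), let n ≥ 2 be an integer, and let f : X → X be a continuous map. If F_n(f) is accessible, then f is accessible and SF_n(f) is accessible. -/
open Metric Set TopologicalSpace

variable (X : Type*) [MetricSpace X] (n : ℕ)

/-- `g` is accessible (w.r.t. a distance function `d` and the topology of `Z`). -/
def Accessible {Z : Type*} [TopologicalSpace Z] (d : Z → Z → ℝ) (g : Z → Z) : Prop :=
  ∀ ε : ℝ, 0 < ε → ∀ U V : Set Z, IsOpen U → IsOpen V → U.Nonempty → V.Nonempty →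
    ∃ x ∈ U, ∃ y ∈ V, ∃ k : ℕ, 0 < k ∧ d (g^[k] x) (g^[k] y) < ε


lemma fnMap_iterate_coe {X : Type*} [MetricSpace X] {n : ℕ} (f : X → X) (k : ℕ) (A : Fn X n) :
    (((FnMap X n f)^[k] A).1 : Set X) = f^[k] '' (A.1 : Set X) := by
  induction k with
  | zero => simp
  | succ k ih =>
    rw [Function.iterate_succ_apply', Function.iterate_succ']
    show f '' (((FnMap X n f)^[k] A).1 : Set X) = _
    rw [ih, Set.image_comp]

lemma isOpen_fnSub {X : Type*} [MetricSpace X] {n : ℕ} [CompactSpace X] (U : Set X)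
    (hU : IsOpen U) : IsOpen {A : Fn X n | (A.1 : Set X) ⊆ U} := by
  rw [Metric.isOpen_iff]
  rintro A hA
  obtain ⟨δ, hδ, hsub⟩ := A.1.isCompact.exists_thickening_subset_open hU hA
  refine ⟨δ, hδ, fun B hB => ?_⟩
  have hd : hausdorffDist (B.1 : Set X) (A.1 : Set X) < δ := by
    rw [mem_ball, Subtype.dist_eq, NonemptyCompacts.dist_eq] at hB
    exact hB
  intro b hb
  obtain ⟨a, ha, hab⟩ := exists_dist_lt_of_hausdorffDist_lt hb hd
    (hausdorffEdist_ne_top_of_nonempty_of_bounded B.1.nonempty A.1.nonempty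
      isBounded_of_compactSpace isBounded_of_compactSpace)
  exact hsub (Metric.mem_thickening_iff.2 ⟨a, ha, hab⟩)

noncomputable def fnSingleton {X : Type*} [MetricSpace X] {n : ℕ} (hn : 1 ≤ n) (x : X) :
    Fn X n :=
  ⟨⟨⟨{x}, isCompact_singleton⟩, Set.singleton_nonempty x⟩, Set.finite_singleton x, by
    simpa using hn⟩

lemma sfnMap_iterate {X : Type*} [MetricSpace X] {n : ℕ} (f : X → X) (k : ℕ) (A : Fn X n) :
    (SFnMap X n f)^[k] (SFnQ X n A) = SFnQ X n ((FnMap X n f)^[k] A) := by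
  induction k with
  | zero => rfl
  | succ k ih => rw [Function.iterate_succ_apply', Function.iterate_succ_apply', ih]; rfl

lemma sfnDist_le {X : Type*} [MetricSpace X] {n : ℕ} (A B : Fn X n) :
    SFnDist X n (SFnQ X n A) (SFnQ X n B) ≤ dist A B := by
  apply Metric.hausdorffDist_le_of_mem_dist dist_nonneg
  · rintro C (hC | hC)
    · exact ⟨C, Or.inl hC, by rw [dist_self]; exact dist_nonneg⟩
    · simp only [Set.mem_preimage, Set.mem_singleton_iff, SFnQ] at hC
      rcases Quotient.exact hC with rfl | ⟨h1, _⟩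
      · exact ⟨B, Or.inr rfl, le_refl _⟩
      · exact ⟨C, Or.inl h1, by rw [dist_self]; exact dist_nonneg⟩
  · rintro C (hC | hC)
    · exact ⟨C, Or.inl hC, by rw [dist_self]; exact dist_nonneg⟩
    · simp only [Set.mem_preimage, Set.mem_singleton_iff, SFnQ] at hC
      rcases Quotient.exact hC with rfl | ⟨h1, _⟩
      · exact ⟨A, Or.inr rfl, by rw [dist_comm]⟩
      · exact ⟨C, Or.inl h1, by rw [dist_self]; exact dist_nonneg⟩

theorem stmt6 (X : Type*) [MetricSpace X] [CompactSpace X] [Nontrivial X]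
    (hX : Perfect (Set.univ : Set X))
    (n : ℕ) (hn : 2 ≤ n) (f : X → X) (hf : Continuous f) :
    Accessible dist (FnMap X n f) →
      Accessible (dist : X → X → ℝ) f ∧ Accessible (SFnDist X n) (SFnMap X n f) := by
  intro hF
  have hn1 : 1 ≤ n := le_trans one_le_two hn
  constructor
  · intro ε hε U V hU hV ⟨u, hu⟩ ⟨v, hv⟩
    obtain ⟨A, hA, B, hB, k, hk, hd⟩ := hF ε hε
      {A : Fn X n | (A.1 : Set X) ⊆ U} {A : Fn X n | (A.1 : Set X) ⊆ V}
      (isOpen_fnSub U hU) (isOpen_fnSub V hV)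
      ⟨fnSingleton hn1 u, by simpa [fnSingleton] using hu⟩
      ⟨fnSingleton hn1 v, by simpa [fnSingleton] using hv⟩
    obtain ⟨a, ha⟩ := A.1.nonempty
    rw [Subtype.dist_eq, NonemptyCompacts.dist_eq] at hd
    have hfa : f^[k] a ∈ ((((FnMap X n f)^[k] A) : Fn X n).1 : Set X) := by
      rw [fnMap_iterate_coe]; exact ⟨a, ha, rfl⟩
    obtain ⟨b', hb', hab⟩ := exists_dist_lt_of_hausdorffDist_lt hfa hd
      (hausdorffEdist_ne_top_of_nonempty_of_bounded
        (((FnMap X n f)^[k] A) : Fn X n).1.nonempty (((FnMap X n f)^[k] B) : Fn X n).1.nonempty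
        isBounded_of_compactSpace isBounded_of_compactSpace)
    rw [fnMap_iterate_coe] at hb'
    obtain ⟨b, hb, rfl⟩ := hb'
    exact ⟨a, hA ha, b, hB hb, k, hk, hab⟩
  · intro ε hε U V hU hV ⟨u, hu⟩ ⟨v, hv⟩
    have hq : Continuous (SFnQ X n) := continuous_quotient_mk'
    obtain ⟨u', hu'⟩ := Quotient.exists_rep u
    obtain ⟨v', hv'⟩ := Quotient.exists_rep v
    obtain ⟨A, hA, B, hB, k, hk, hd⟩ := hF ε hε (SFnQ X n ⁻¹' U) (SFnQ X n ⁻¹' V)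
      (hU.preimage hq) (hV.preimage hq)
      ⟨u', by simp [Set.mem_preimage, SFnQ, hu', hu]⟩
      ⟨v', by simp [Set.mem_preimage, SFnQ, hv', hv]⟩
    refine ⟨SFnQ X n A, hA, SFnQ X n B, hB, k, hk, ?_⟩
    rw [sfnMap_iterate, sfnMap_iterate]
    exact lt_of_le_of_lt (sfnDist_le _ _) hd
end

section
/- Let X be a compactum (a compact perfect metric space with more than one point), let n ≥ 2 be an integer, and let f : X → X be a continuous map. Then there exists A ∈ F_n(X) with ω(A, F_n(f)) = F_n(X) if and only if there exists φ ∈ SF_n(X) with ω(φ, SF_n(f)) = SF_n(X); moreover, if there exists A ∈ F_n(X) with ω(A, F_n(f)) = F_n(X), then there exists x ∈ X with ω(x, f) = X. -/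
open Metric Set TopologicalSpace

variable (X : Type*) [MetricSpace X] (n : ℕ)

/-- The ω-limit set of `z` under `g`. -/
def OmegaLimit {Z : Type*} [TopologicalSpace Z] (g : Z → Z) (z : Z) : Set Z :=
  {y | ∀ k : ℕ, ∀ U : Set Z, IsOpen U → y ∈ U → ∃ m : ℕ, k ≤ m ∧ g^[m] z ∈ U}

namespace Stmt11Aux

variable {X : Type*} [MetricSpace X] {n : ℕ} {f : X → X}

lemma fnMap_coe (A : Fn X n) : ((FnMap X n f A).1 : Set X) = f '' (A.1 : Set X) := rfl

lemma fnIter_coe (m : ℕ) (A : Fn X n) :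
    (((FnMap X n f)^[m] A).1 : Set X) = f^[m] '' (A.1 : Set X) := by
  induction m with
  | zero => simp
  | succ m ih =>
    rw [Function.iterate_succ_apply', fnMap_coe, ih, Function.iterate_succ',
      Set.image_comp]

lemma f1_iter (m : ℕ) {A : Fn X n} (hA : A ∈ F1 X n) : (FnMap X n f)^[m] A ∈ F1 X n := by
  obtain ⟨x, hx⟩ := hA
  exact ⟨f^[m] x, by rw [fnIter_coe, hx, Set.image_singleton]⟩

lemma sfnIter (m : ℕ) (A : Fn X n) :
    (SFnMap X n f)^[m] (SFnQ X n A) = SFnQ X n ((FnMap X n f)^[m] A) := by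
  induction m with
  | zero => rfl
  | succ m ih =>
    rw [Function.iterate_succ_apply', ih, Function.iterate_succ_apply']
    rfl

lemma singClosed [CompactSpace X] : IsClosed (F1 X n) := by
  have hc : Continuous (fun x : X =>
      (⟨⟨{x}, isCompact_singleton⟩, ⟨x, rfl⟩⟩ : NonemptyCompacts X)) := by
    refine LipschitzWith.continuous (K := 1) (lipschitzWith_iff_dist_le_mul.2 fun x y => ?_)
    rw [NonemptyCompacts.dist_eq]
    simp only [NNReal.coe_one, one_mul]
    refine hausdorffDist_le_of_mem_dist dist_nonneg ?_ ?_
    · intro a ha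
      have ha' : a = x := ha
      subst ha'
      exact ⟨y, rfl, le_of_eq rfl⟩
    · intro b hb
      have hb' : b = y := hb
      exact ⟨x, rfl, le_of_eq (by rw [hb', dist_comm])⟩
  have hcomp : IsCompact (Set.range fun x : X =>
      (⟨⟨{x}, isCompact_singleton⟩, ⟨x, rfl⟩⟩ : NonemptyCompacts X)) :=
    isCompact_range hc
  have heq : F1 X n = Subtype.val ⁻¹' (Set.range fun x : X =>
      (⟨⟨{x}, isCompact_singleton⟩, ⟨x, rfl⟩⟩ : NonemptyCompacts X)) := by
    ext A
    constructor
    · rintro ⟨x, hx⟩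
      exact ⟨x, NonemptyCompacts.ext hx.symm⟩
    · rintro ⟨x, hx⟩
      exact ⟨x, congrArg _ hx.symm⟩
  rw [heq]
  exact hcomp.isClosed.preimage continuous_subtype_val

/-- A two-point element of `Fn X n`. -/
noncomputable def pair (hn : 2 ≤ n) (x y : X) : Fn X n :=
  ⟨⟨⟨{x, y}, ((Set.finite_singleton y).insert x).isCompact⟩, ⟨x, Or.inl rfl⟩⟩,
    (Set.finite_singleton y).insert x,
    le_trans (Set.ncard_insert_le x {y}) (by rw [Set.ncard_singleton]; exact hn)⟩

lemma pair_coe (hn : 2 ≤ n) (x y : X) : ((pair hn x y).1 : Set X) = {x, y} := rfl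

lemma pair_not_F1 (hn : 2 ≤ n) {x y : X} (hxy : x ≠ y) : pair hn x y ∉ F1 X n := by
  rintro ⟨z, hz⟩
  rw [pair_coe] at hz
  have hx : x ∈ ({z} : Set X) := hz ▸ (Or.inl rfl)
  have hy : y ∈ ({z} : Set X) := hz ▸ (Or.inr rfl)
  exact hxy (hx.trans hy.symm)

lemma dense_compl_F1 (hX : Perfect (Set.univ : Set X)) (hn : 2 ≤ n)
    {U : Set (Fn X n)} (hU : IsOpen U) {B : Fn X n} (hBU : B ∈ U) :
    ∃ B' ∈ U, B' ∉ F1 X n := by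
  by_cases hBF : B ∈ F1 X n
  · obtain ⟨x, hx⟩ := hBF
    obtain ⟨ε, hε, hball⟩ := Metric.isOpen_iff.1 hU B hBU
    have hacc := hX.acc x (Set.mem_univ x)
    rw [accPt_iff_nhds] at hacc
    obtain ⟨y, ⟨hy1, -⟩, hyx⟩ := hacc (Metric.ball x ε) (Metric.ball_mem_nhds x hε)
    refine ⟨pair hn x y, hball ?_, pair_not_F1 hn (Ne.symm hyx)⟩
    rw [Metric.mem_ball, Subtype.dist_eq, NonemptyCompacts.dist_eq, pair_coe, hx]
    refine lt_of_le_of_lt (hausdorffDist_le_of_mem_dist dist_nonneg ?_ ?_)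
      (Metric.mem_ball.1 hy1)
    · rintro a (rfl | ha)
      · exact ⟨a, rfl, by simp only [dist_self]; exact dist_nonneg⟩
      · have ha' : a = y := ha
        exact ⟨x, rfl, le_of_eq (by rw [ha'])⟩
    · intro b hb
      have hb' : b = x := hb
      exact ⟨x, Or.inl rfl, by rw [hb', dist_self]; exact dist_nonneg⟩
  · exact ⟨B, hBU, hBF⟩

end Stmt11Aux

theorem stmt11 (X : Type*) [MetricSpace X] [CompactSpace X] [Nontrivial X]
    (hX : Perfect (Set.univ : Set X))
    (n : ℕ) (hn : 2 ≤ n) (f : X → X) (hf : Continuous f) :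
    ((∃ A : Fn X n, OmegaLimit (FnMap X n f) A = Set.univ) ↔
      (∃ φ : SFn X n, OmegaLimit (SFnMap X n f) φ = Set.univ)) ∧
    ((∃ A : Fn X n, OmegaLimit (FnMap X n f) A = Set.univ) →
      ∃ x : X, OmegaLimit f x = Set.univ) := by
  classical
  have hn1 : 1 ≤ n := le_trans one_le_two hn
  have hqcont : Continuous (SFnQ X n) := continuous_quotient_mk'
  have hqmap : Topology.IsQuotientMap (SFnQ X n) := isQuotientMap_quotient_mk'
  constructor
  · constructor
    · -- forward
      rintro ⟨A, hA⟩
      refine ⟨SFnQ X n A, Set.eq_univ_of_forall fun ψ => ?_⟩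
      intro k U hU hψU
      obtain ⟨B, hB⟩ := Quotient.exists_rep ψ
      have hB' : SFnQ X n B = ψ := hB
      have hBmem : B ∈ SFnQ X n ⁻¹' U := by
        rw [Set.mem_preimage, hB']; exact hψU
      have hAB : B ∈ OmegaLimit (FnMap X n f) A := by rw [hA]; trivial
      obtain ⟨m, hm, hmem⟩ := hAB k _ (hU.preimage hqcont) hBmem
      refine ⟨m, hm, ?_⟩
      rw [Stmt11Aux.sfnIter]
      exact hmem
    · -- backward
      rintro ⟨φ, hφ⟩
      obtain ⟨A₀, hA₀⟩ := Quotient.exists_rep φ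
      have hA₀' : SFnQ X n A₀ = φ := hA₀
      obtain ⟨u, v, huv⟩ := exists_pair_ne X
      -- A₀ is not a singleton
      have hA₀F : A₀ ∉ F1 X n := by
        intro hF
        set V : Set (SFn X n) := {ψ | ψ ≠ SFnQ X n A₀} with hVdef
        have hpre : SFnQ X n ⁻¹' V = (F1 X n)ᶜ := by
          ext C
          simp only [Set.mem_preimage, hVdef, Set.mem_setOf_eq, Set.mem_compl_iff]
          constructor
          · intro h hC
            exact h (Quotient.sound (Or.inr ⟨hC, hF⟩))
          · intro hC h
            have h' : C = A₀ ∨ (C ∈ F1 X n ∧ A₀ ∈ F1 X n) := Quotient.exact h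
            rcases h' with rfl | ⟨h1, -⟩
            · exact hC hF
            · exact hC h1
        have hVopen : IsOpen V := by
          rw [← hqmap.isOpen_preimage, hpre]
          exact Stmt11Aux.singClosed.isOpen_compl
        have htsV : SFnQ X n (Stmt11Aux.pair hn u v) ∈ V := by
          intro h
          have h' : Stmt11Aux.pair hn u v = A₀ ∨
              (Stmt11Aux.pair hn u v ∈ F1 X n ∧ A₀ ∈ F1 X n) := Quotient.exact h
          rcases h' with rfl | ⟨h1, -⟩
          · exact Stmt11Aux.pair_not_F1 hn huv hF
          · exact Stmt11Aux.pair_not_F1 hn huv h1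
        have hmem : SFnQ X n (Stmt11Aux.pair hn u v) ∈ OmegaLimit (SFnMap X n f) φ := by
          rw [hφ]; trivial
        obtain ⟨m, -, hmV⟩ := hmem 0 V hVopen htsV
        rw [← hA₀', Stmt11Aux.sfnIter] at hmV
        exact hmV (Quotient.sound (Or.inr ⟨Stmt11Aux.f1_iter m hF, hF⟩))
      -- main claim
      refine ⟨A₀, Set.eq_univ_of_forall fun B => ?_⟩
      intro k U hU hBU
      obtain ⟨B', hB'U, hB'F⟩ := Stmt11Aux.dense_compl_F1 hX hn hU hBU
      set W : Set (Fn X n) := U \ F1 X n with hWdef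
      have hWopen : IsOpen W := hU.sdiff Stmt11Aux.singClosed
      set V : Set (SFn X n) := SFnQ X n '' W with hVdef
      have hpre : SFnQ X n ⁻¹' V = W := by
        ext C
        constructor
        · rintro ⟨D, hD, hDC⟩
          have h' : D = C ∨ (D ∈ F1 X n ∧ C ∈ F1 X n) := Quotient.exact hDC
          rcases h' with rfl | ⟨h1, -⟩
          · exact hD
          · exact absurd h1 hD.2
        · intro hC
          exact ⟨C, hC, rfl⟩
      have hVopen : IsOpen V := by
        rw [← hqmap.isOpen_preimage, hpre]
        exact hWopen
      have hmemV : SFnQ X n B' ∈ V := ⟨B', ⟨hB'U, hB'F⟩, rfl⟩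
      have hωB' : SFnQ X n B' ∈ OmegaLimit (SFnMap X n f) φ := by rw [hφ]; trivial
      obtain ⟨m, hm, hmV⟩ := hωB' k V hVopen hmemV
      rw [← hA₀', Stmt11Aux.sfnIter] at hmV
      obtain ⟨D, hD, hDC⟩ := hmV
      have h' : D = (FnMap X n f)^[m] A₀ ∨
          (D ∈ F1 X n ∧ (FnMap X n f)^[m] A₀ ∈ F1 X n) := Quotient.exact hDC
      rcases h' with rfl | ⟨h1, -⟩
      · exact ⟨m, hm, hD.1⟩
      · exact absurd h1 hD.2
  · -- part 2
    rintro ⟨A, hA⟩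
    obtain ⟨a, ha⟩ := A.1.nonempty
    refine ⟨a, Set.eq_univ_of_forall fun y => ?_⟩
    intro k U hU hyU
    obtain ⟨ε, hε, hball⟩ := Metric.isOpen_iff.1 hU y hyU
    set S : Fn X n := ⟨⟨⟨{y}, isCompact_singleton⟩, ⟨y, rfl⟩⟩, Set.finite_singleton y,
      by show ({y} : Set X).ncard ≤ n; rw [Set.ncard_singleton]; exact hn1⟩ with hS
    have hSmem : S ∈ OmegaLimit (FnMap X n f) A := by rw [hA]; trivial
    obtain ⟨m, hm, hmem⟩ := hSmem k (Metric.ball S ε) Metric.isOpen_ball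
      (Metric.mem_ball_self hε)
    refine ⟨m, hm, hball ?_⟩
    have hd : hausdorffDist (((FnMap X n f)^[m] A).1 : Set X) ({y} : Set X) < ε := by
      have h := Metric.mem_ball.1 hmem
      rwa [Subtype.dist_eq, NonemptyCompacts.dist_eq] at h
    have hmemA : f^[m] a ∈ (((FnMap X n f)^[m] A).1 : Set X) := by
      rw [Stmt11Aux.fnIter_coe]; exact Set.mem_image_of_mem _ ha
    have hfin : EMetric.hausdorffEdist (((FnMap X n f)^[m] A).1 : Set X) ({y} : Set X) ≠ ⊤ :=
      Metric.hausdorffEdist_ne_top_of_nonempty_of_bounded ((FnMap X n f)^[m] A).1.nonempty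
        ⟨y, rfl⟩ ((FnMap X n f)^[m] A).1.isCompact.isBounded Bornology.isBounded_singleton
    obtain ⟨b, hb, hdb⟩ := Metric.exists_dist_lt_of_hausdorffDist_lt hmemA hd hfin
    have hb' : b = y := hb
    rw [Metric.mem_ball, ← hb']
    exact hdb
end
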